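/- For every natural number N ≥ 2, the quantity k(√(N-1)) = N·(∫₀^{√(N-1)} e^{-s²/2} s^{N-1} ds)/(∫₀^{√(N-1)} e^{-s²/2} s^{N+1} ds) satisfies k(√(N-1)) ≤ (2N+1)/(N-1). -/

import Mathlib

open Real

/-!
Write `I m R = ∫₀ᴿ e^{-s²/2} sᵐ ds`. Integrating `(sᴺ e^{-s²/2})' = N s^{N-1} e^{-s²/2} - s^{N+1} e^{-s²/2}`
gives `N I (N-1) R = I (N+1) R + Rᴺ e^{-R²/2}`, so `k(R) = 1 + Rᴺ e^{-R²/2} / I (N+1) R`.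
Bounding `e^{-s²/2} ≥ e^{-R²/2}` on `[0, R]` gives `I (N+1) R ≥ e^{-R²/2} R^{N+2} / (N+2)`, and at
`R² = N - 1` the correction term is therefore at most `(N+2)/(N-1)`.
-/

noncomputable def gaussMoment (m : ℕ) (R : ℝ) : ℝ :=
  ∫ s in (0:ℝ)..R, exp (-s ^ 2 / 2) * s ^ m

lemma intervalIntegrable_exp_neg_sq_div_two_mul_pow (m : ℕ) (a b : ℝ) :
    IntervalIntegrable (fun s : ℝ => exp (-s ^ 2 / 2) * s ^ m) MeasureTheory.volume a b :=
  (by fun_prop : Continuous fun s : ℝ => exp (-s ^ 2 / 2) * s ^ m).intervalIntegrable a b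

lemma hasDerivAt_pow_succ_mul_exp_neg_sq_div_two (n : ℕ) (x : ℝ) :
    HasDerivAt (fun s : ℝ => s ^ (n + 1) * exp (-s ^ 2 / 2))
      ((n + 1) * (exp (-x ^ 2 / 2) * x ^ n) - exp (-x ^ 2 / 2) * x ^ (n + 2)) x := by
  have hexp : HasDerivAt (fun s : ℝ => exp (-s ^ 2 / 2)) (exp (-x ^ 2 / 2) * -x) x := by
    refine HasDerivAt.exp (((hasDerivAt_pow 2 x).neg.div_const 2).congr_deriv ?_)
    ring
  refine ((hasDerivAt_pow (n + 1) x).mul hexp).congr_deriv ?_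
  push_cast
  ring

lemma gaussMoment_add_two (n : ℕ) (R : ℝ) :
    gaussMoment (n + 2) R = (n + 1) * gaussMoment n R - R ^ (n + 1) * exp (-R ^ 2 / 2) := by
  have hInt := intervalIntegrable_exp_neg_sq_div_two_mul_pow
  have hFTC := intervalIntegral.integral_eq_sub_of_hasDerivAt
    (fun x _ => hasDerivAt_pow_succ_mul_exp_neg_sq_div_two n x)
    (((hInt n 0 R).const_mul _).sub (hInt (n + 2) 0 R))
  rw [intervalIntegral.integral_sub ((hInt n 0 R).const_mul _) (hInt (n + 2) 0 R),
    intervalIntegral.integral_const_mul, zero_pow n.succ_ne_zero, zero_mul, sub_zero] at hFTC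
  rw [gaussMoment, gaussMoment]
  linarith

lemma exp_neg_sq_div_two_mul_pow_div_le_gaussMoment (m : ℕ) {R : ℝ} (hR : 0 ≤ R) :
    exp (-R ^ 2 / 2) * (R ^ (m + 1) / (m + 1)) ≤ gaussMoment m R := by
  calc exp (-R ^ 2 / 2) * (R ^ (m + 1) / (m + 1))
      = ∫ s in (0:ℝ)..R, exp (-R ^ 2 / 2) * s ^ m := by
        rw [intervalIntegral.integral_const_mul, integral_pow, zero_pow m.succ_ne_zero, sub_zero]
    _ ≤ gaussMoment m R := by
        refine intervalIntegral.integral_mono_on hR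
          ((continuous_const.mul (continuous_pow m)).intervalIntegrable 0 R)
          (intervalIntegrable_exp_neg_sq_div_two_mul_pow m 0 R) fun s ⟨hs0, hsR⟩ => ?_
        gcongr

theorem k_sqrt_sub_one_le (N : ℕ) (hN : 2 ≤ N) :
    (N : ℝ) * (∫ s in (0:ℝ)..Real.sqrt ((N : ℝ) - 1), Real.exp (-s ^ 2 / 2) * s ^ (N - 1)) /
        (∫ s in (0:ℝ)..Real.sqrt ((N : ℝ) - 1), Real.exp (-s ^ 2 / 2) * s ^ (N + 1)) ≤
      (2 * (N : ℝ) + 1) / ((N : ℝ) - 1) := by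
  obtain ⟨n, rfl⟩ : ∃ n, N = n + 1 := ⟨N - 1, by omega⟩
  have hn : (1 : ℝ) ≤ n := by exact_mod_cast (by omega : 1 ≤ n)
  change (n + 1 : ℕ) * gaussMoment (n + 1 - 1) √((n + 1 : ℕ) - 1) /
      gaussMoment (n + 2) √((n + 1 : ℕ) - 1) ≤ _
  push_cast
  simp only [add_sub_cancel_right]
  set R := √(n : ℝ)
  have hR : R ^ 2 = n := sq_sqrt (by linarith)
  have hlow := exp_neg_sq_div_two_mul_pow_div_le_gaussMoment (n + 2) (sqrt_nonneg n : 0 ≤ R)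
  have hrec := gaussMoment_add_two n R
  have hE : 0 < R ^ (n + 1) * exp (-R ^ 2 / 2) := by positivity
  have hcorrection : n * (R ^ (n + 1) * exp (-R ^ 2 / 2)) ≤ (n + 3) * gaussMoment (n + 2) R := by
    rw [pow_add R (n + 1) 2, hR] at hlow
    rw [hR]
    push_cast at hlow
    rw [mul_div_assoc', div_le_iff₀ (by positivity)] at hlow
    linarith
  have hpos : 0 < gaussMoment (n + 2) R := by nlinarith
  rw [div_le_div_iff₀ hpos (by linarith)]
  linear_combination hcorrection - (n : ℝ) * hrec
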